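/- For any set 𝒲 of probability measures on a measurable space (Y,𝒜), there exists a countable subset 𝒲' ⊂ 𝒲 such that C_α(𝒲') = C_α(𝒲) for every order α ∈ (0,∞] simultaneously. -/

import Mathlib

open MeasureTheory ENNReal Filter Topology

namespace RenyiPaper

open scoped Classical

variable {Y : Type*} [MeasurableSpace Y]

/-- The Kullback–Leibler divergence, i.e. the order-`1` Rényi divergence, with
values in `EReal`; it is `⊤` unless `W ≪ Q` and the log-likelihood ratio is integrable. -/
noncomputable def klDiv (W Q : Measure Y) : EReal :=
  if W ≪ Q ∧ Integrable (llr W Q) W then ((∫ y, llr W Q y ∂W : ℝ) : EReal) else ⊤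

/-- The integral `∫ (dW/dν)^α (dQ/dν)^{1-α} dν` (with `ν = W + Q`) appearing in the
definition of the order-`α` Rényi divergence for `α ∈ (0,1) ∪ (1,∞)`. -/
noncomputable def renyiIntegral (α : ℝ) (W Q : Measure Y) : ℝ≥0∞ :=
  ∫⁻ y, (W.rnDeriv (W + Q) y) ^ α * (Q.rnDeriv (W + Q) y) ^ (1 - α) ∂(W + Q)

/-- The order-`α` Rényi divergence `D_α(W‖Q)` for `α ∈ (0,∞]`. -/
noncomputable def renyiDiv (α : ℝ≥0∞) (W Q : Measure Y) : EReal :=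
  if α = ∞ then
    ENNReal.log (essSup (fun y => W.rnDeriv (W + Q) y / Q.rnDeriv (W + Q) y) (W + Q))
  else if α = 1 then klDiv W Q
  else (((α.toReal - 1)⁻¹ : ℝ) : EReal) * ENNReal.log (renyiIntegral α.toReal W Q)

/-- `P` is a finitely supported probability mass function on `𝒲`. -/
def IsFinPrior (𝒲 : Set (Measure Y)) (P : Measure Y → ℝ≥0∞) : Prop :=
  (Function.support P).Finite ∧ Function.support P ⊆ 𝒲 ∧ ∑' W, P W = 1

/-- A reference measure dominating every measure in the support of the prior `P`. -/
noncomputable def refMeasure (P : Measure Y → ℝ≥0∞) : Measure Y :=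
  Measure.sum (fun W : Function.support P => (W : Measure Y))

/-- The order-`α` mean measure `μ_{α,P}`. -/
noncomputable def meanMeasure (α : ℝ≥0∞) (P : Measure Y → ℝ≥0∞) : Measure Y :=
  (refMeasure P).withDensity fun y =>
    if α = ∞ then ⨆ W : Function.support P, (W : Measure Y).rnDeriv (refMeasure P) y
    else (∑' W : Function.support P,
        P W * ((W : Measure Y).rnDeriv (refMeasure P) y) ^ α.toReal) ^ α.toReal⁻¹

/-- The order-`α` Rényi mean `q_{α,P} = μ_{α,P} / ‖μ_{α,P}‖`. -/
noncomputable def renyiMean (α : ℝ≥0∞) (P : Measure Y → ℝ≥0∞) : Measure Y :=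
  (meanMeasure α P Set.univ)⁻¹ • meanMeasure α P

/-- The order-`α` Rényi information `I_α(P;𝒲)` of the prior `P`. -/
noncomputable def renyiInfo (α : ℝ≥0∞) (P : Measure Y → ℝ≥0∞) : EReal :=
  if α = ∞ then ENNReal.log (meanMeasure ∞ P Set.univ)
  else if α = 1 then
    ∑' W : Function.support P,
      ((P (W : Measure Y)).toReal : EReal) * klDiv (W : Measure Y) (meanMeasure 1 P)
  else ((α.toReal / (α.toReal - 1) : ℝ) : EReal) * ENNReal.log (meanMeasure α P Set.univ)

/-- The order-`α` Rényi capacity `C_α(𝒲)`. -/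
noncomputable def renyiCapacity (α : ℝ≥0∞) (𝒲 : Set (Measure Y)) : EReal :=
  ⨆ P ∈ {P : Measure Y → ℝ≥0∞ | IsFinPrior 𝒲 P}, renyiInfo α P

/-- The order-`α` Rényi radius of `𝒲` relative to `Q`, `S_α(𝒲‖Q)`. -/
noncomputable def relRadius (α : ℝ≥0∞) (𝒲 : Set (Measure Y)) (Q : Measure Y) : EReal :=
  ⨆ W ∈ 𝒲, renyiDiv α W Q

/-- The prior `P` viewed as a (discrete) measure on the space of measures. -/
noncomputable def priorMeasure (P : Measure Y → ℝ≥0∞) : Measure (Measure Y) :=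
  Measure.sum (fun W : Function.support P => P (W : Measure Y) • Measure.dirac (W : Measure Y))

/-- The joint measure `P ⊛ 𝒲`, whose first marginal is `P` and whose conditional
distribution given `W` is `W` itself. -/
noncomputable def jointMeasure (P : Measure Y → ℝ≥0∞) : Measure (Measure Y × Y) :=
  Measure.sum (fun W : Function.support P =>
    P (W : Measure Y) • ((Measure.dirac (W : Measure Y)).prod (W : Measure Y)))

/-- The product measure `P ⊗ Q`. -/
noncomputable def prodMeasure (P : Measure Y → ℝ≥0∞) (Q : Measure Y) : Measure (Measure Y × Y) :=
  (priorMeasure P).prod Q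

/-- The total variation distance `‖μ - ν‖` between two (finite) measures. -/
noncomputable def tvDist (μ ν : Measure Y) : ℝ≥0∞ :=
  ∫⁻ y, (μ.rnDeriv (μ + ν) y - ν.rnDeriv (μ + ν) y)
      + (ν.rnDeriv (μ + ν) y - μ.rnDeriv (μ + ν) y) ∂(μ + ν)

/-- The total variation distance `‖P₁ - P₂‖ = Σ_W |P₁(W) - P₂(W)|` between two priors. -/
noncomputable def priorDist (P₁ P₂ : Measure Y → ℝ≥0∞) : ℝ≥0∞ :=
  ∑' W, ((P₁ W - P₂ W) + (P₂ W - P₁ W))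

/-- `Q` is an order-`α` Rényi center of `𝒲`: a probability measure whose relative
Rényi radius equals the Rényi capacity. -/
def IsRenyiCenter (α : ℝ≥0∞) (𝒲 : Set (Measure Y)) (Q : Measure Y) : Prop :=
  IsProbabilityMeasure Q ∧ relRadius α 𝒲 Q = renyiCapacity α 𝒲


/-!
For a finite prior `P`, let `N(b)` be the total mass of the order-`b` mean measure. Hölder's
inequality, applied once to the sum over `W` and once to the integral, makes `b ↦ b ln N(b)`
convex on `(0,∞)`; it vanishes at `b = 1`, so `I_α(P) = α ln N(α) / (α - 1)` is the slope of a
secant through `1`, hence nondecreasing and continuous on `(0,1) ∪ (1,∞)`. Consequently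
`C_α = ⨆ C_q` over rational `q < α` for finite `α ≠ 1`, and a countable `𝒲'` realising `C_∞`
and every rational-order `C_q` with countably many priors realises every `C_α`.
-/

open Set

lemma exists_countable_subset_biSup_eq {α ι : Type*} [CompleteLinearOrder α]
    [TopologicalSpace α] [OrderTopology α] [FirstCountableTopology α] (s : Set ι) (g : ι → α) :
    ∃ t ⊆ s, t.Countable ∧ ⨆ i ∈ t, g i = ⨆ i ∈ s, g i := by
  rcases s.eq_empty_or_nonempty with rfl | hs
  · exact ⟨∅, subset_rfl, countable_empty, rfl⟩
  obtain ⟨u, -, hu_lim, hu_mem⟩ := exists_seq_tendsto_sSup (hs.image g) (OrderTop.bddAbove _)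
  choose x hx hgx using hu_mem
  refine ⟨range x, range_subset_iff.2 hx, countable_range x,
    le_antisymm (biSup_mono fun i hi => ?_) ?_⟩
  · obtain ⟨n, rfl⟩ := hi
    exact hx n
  · rw [← sSup_image]
    exact le_of_tendsto' hu_lim fun n => hgx n ▸ le_biSup g (mem_range_self n)

lemma coe_eq_iSup_rat_of_monotoneOn {f : ℝ → ℝ} {s : Set ℝ} (hs : IsOpen s)
    (hmono : MonotoneOn f s) (hcont : ContinuousOn f s) {a : ℝ} (ha : a ∈ s) :
    (f a : EReal) = ⨆ (q : ℚ) (_ : (q : ℝ) ∈ s ∧ (q : ℝ) < a), (f q : EReal) := by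
  refine le_antisymm ?_ (iSup₂_le fun q hq => EReal.coe_le_coe_iff.2 (hmono hq.1 ha hq.2.le))
  obtain ⟨u, -, hu_lt, hu_lim⟩ := Real.exists_seq_rat_strictMono_tendsto a
  have hf_lim : Tendsto (fun n => (f (u n) : EReal)) atTop (𝓝 (f a)) :=
    (continuous_coe_real_ereal.tendsto _).comp
      ((hcont.continuousAt (hs.mem_nhds ha)).tendsto.comp hu_lim)
  exact le_of_tendsto hf_lim <| (hu_lim.eventually (hs.mem_nhds ha)).mono fun n hn =>
    le_iSup₂_of_le (u n) ⟨hn, hu_lt n⟩ le_rfl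

lemma tsum_mul_rpow_le {ι : Type*} (w x : ι → ℝ≥0∞) {s t b₁ b₂ : ℝ} (hs : 0 ≤ s) (ht : 0 ≤ t)
    (hst : s + t = 1) (hb₁ : 0 ≤ b₁) (hb₂ : 0 ≤ b₂) :
    ∑' i, w i * x i ^ (s * b₁ + t * b₂)
      ≤ (∑' i, w i * x i ^ b₁) ^ s * (∑' i, w i * x i ^ b₂) ^ t := by
  let : MeasurableSpace ι := ⊤
  have : MeasurableSingletonClass ι := ⟨fun _ => trivial⟩
  have hsplit : ∀ i, w i * x i ^ (s * b₁ + t * b₂)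
      = (w i * x i ^ b₁) ^ s * (w i * x i ^ b₂) ^ t := fun i => by
    rw [ENNReal.mul_rpow_of_nonneg _ _ hs, ENNReal.mul_rpow_of_nonneg _ _ ht, ← ENNReal.rpow_mul,
      ← ENNReal.rpow_mul, mul_mul_mul_comm, ← ENNReal.rpow_add_of_nonneg _ _ hs ht, hst,
      ENNReal.rpow_one, ← ENNReal.rpow_add_of_nonneg _ _ (by positivity) (by positivity),
      mul_comm b₁, mul_comm b₂]
  simp_rw [hsplit, ← lintegral_count]
  exact ENNReal.lintegral_mul_norm_pow_le measurable_from_top.aemeasurable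
    measurable_from_top.aemeasurable hs ht hst

section Capacity

variable {P : Measure Y → ℝ≥0∞} {𝒲 : Set (Measure Y)}

lemma renyiInfo_le_renyiCapacity (hP : IsFinPrior 𝒲 P) (α : ℝ≥0∞) :
    renyiInfo α P ≤ renyiCapacity α 𝒲 :=
  le_biSup (renyiInfo α) hP

lemma renyiCapacity_mono {𝒲₁ 𝒲₂ : Set (Measure Y)} (h : 𝒲₁ ⊆ 𝒲₂) (α : ℝ≥0∞) :
    renyiCapacity α 𝒲₁ ≤ renyiCapacity α 𝒲₂ :=
  biSup_mono fun _ hP => ⟨hP.1, hP.2.1.trans h, hP.2.2⟩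

lemma exists_countable_subset_renyiCapacity_eq {A : Set ℝ≥0∞} (hA : A.Countable)
    (𝒲 : Set (Measure Y)) :
    ∃ 𝒲' ⊆ 𝒲, 𝒲'.Countable ∧ ∀ α ∈ A, renyiCapacity α 𝒲' = renyiCapacity α 𝒲 := by
  choose T hT_sub hT_countable hT_sup using fun α =>
    exists_countable_subset_biSup_eq {P | IsFinPrior 𝒲 P} (renyiInfo α)
  set 𝒲' := ⋃ α ∈ A, ⋃ P ∈ T α, Function.support P
  have hsub : 𝒲' ⊆ 𝒲 := iUnion₂_subset fun α _ => iUnion₂_subset fun P hP => (hT_sub α hP).2.1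
  refine ⟨𝒲', hsub, hA.biUnion fun α _ =>
    (hT_countable α).biUnion fun P hP => (hT_sub α hP).1.countable,
    fun α hα => (renyiCapacity_mono hsub α).antisymm ?_⟩
  rw [renyiCapacity, ← hT_sup α]
  exact iSup₂_le fun P hP => renyiInfo_le_renyiCapacity
    ⟨(hT_sub α hP).1, fun W hW => mem_biUnion hα (mem_biUnion hP hW), (hT_sub α hP).2.2⟩ α

end Capacity

section MeanMass

variable {P : Measure Y → ℝ≥0∞}

lemma absolutelyContinuous_refMeasure (W : Function.support P) :
    (W : Measure Y) ≪ refMeasure P :=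
  (Measure.le_sum (fun W : Function.support P => (W : Measure Y)) W).absolutelyContinuous

noncomputable def meanDensity (P : Measure Y → ℝ≥0∞) (b : ℝ) (y : Y) : ℝ≥0∞ :=
  (∑' W : Function.support P, P W * ((W : Measure Y).rnDeriv (refMeasure P) y) ^ b) ^ b⁻¹

noncomputable def meanMass (P : Measure Y → ℝ≥0∞) (b : ℝ) : ℝ≥0∞ :=
  ∫⁻ y, meanDensity P b y ∂(refMeasure P)

lemma meanMeasure_univ {α : ℝ≥0∞} (hα : α ≠ ∞) :
    meanMeasure α P univ = meanMass P α.toReal := by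
  rw [meanMeasure, withDensity_apply _ MeasurableSet.univ, Measure.restrict_univ, meanMass]
  simp only [if_neg hα, meanDensity]

lemma measurable_meanDensity (hP : (Function.support P).Countable) (b : ℝ) :
    Measurable (meanDensity P b) :=
  have := hP.to_subtype
  (Measurable.tsum fun _ =>
    ((Measure.measurable_rnDeriv _ _).pow_const _).const_mul _).pow_const _

lemma meanDensity_le_tsum_rnDeriv (hsum : ∑' W, P W ≤ 1) {b : ℝ} (hb : 0 < b) (y : Y) :
    meanDensity P b y ≤ ∑' W : Function.support P, (W : Measure Y).rnDeriv (refMeasure P) y := by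
  set m := ∑' W : Function.support P, (W : Measure Y).rnDeriv (refMeasure P) y
  have hsum : ∑' W : Function.support P, P W * ((W : Measure Y).rnDeriv (refMeasure P) y) ^ b
      ≤ m ^ b :=
    calc _ ≤ ∑' W : Function.support P, P W * m ^ b :=
          ENNReal.tsum_le_tsum fun W => by gcongr; exact ENNReal.le_tsum W
      _ ≤ m ^ b := by
          rw [ENNReal.tsum_mul_right, tsum_subtype_support]
          exact mul_le_of_le_one_left' hsum
  calc meanDensity P b y ≤ (m ^ b) ^ b⁻¹ := ENNReal.rpow_le_rpow hsum (inv_nonneg.2 hb.le)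
    _ = m := ENNReal.rpow_rpow_inv hb.ne' m

lemma meanMass_rpow_le (hP : (Function.support P).Countable) {s t b₁ b₂ : ℝ} (hs : 0 ≤ s)
    (ht : 0 ≤ t) (hst : s + t = 1) (hb₁ : 0 < b₁) (hb₂ : 0 < b₂) :
    meanMass P (s * b₁ + t * b₂) ^ (s * b₁ + t * b₂)
      ≤ meanMass P b₁ ^ (s * b₁) * meanMass P b₂ ^ (t * b₂) := by
  set b := s * b₁ + t * b₂
  have hb : 0 < b := convex_Ioi (0 : ℝ) hb₁ hb₂ hs ht hst
  have hweights : s * b₁ / b + t * b₂ / b = 1 := by rw [← add_div, div_self hb.ne']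
  have hexp : ∀ {c r : ℝ}, 0 < c → c⁻¹ * (r * c / b) = r * b⁻¹ := fun hc => by
    field_simp
  have hdensity : ∀ y, meanDensity P b y
      ≤ meanDensity P b₁ y ^ (s * b₁ / b) * meanDensity P b₂ y ^ (t * b₂ / b) := fun y => by
    simp only [meanDensity, ← ENNReal.rpow_mul, hexp hb₁, hexp hb₂]
    rw [ENNReal.rpow_mul, ENNReal.rpow_mul _ t, ← ENNReal.mul_rpow_of_nonneg _ _ (by positivity)]
    exact ENNReal.rpow_le_rpow (tsum_mul_rpow_le _ _ hs ht hst hb₁.le hb₂.le) (by positivity)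
  have hholder : meanMass P b ≤ meanMass P b₁ ^ (s * b₁ / b) * meanMass P b₂ ^ (t * b₂ / b) :=
    (lintegral_mono hdensity).trans <| ENNReal.lintegral_mul_norm_pow_le
      (measurable_meanDensity hP b₁).aemeasurable (measurable_meanDensity hP b₂).aemeasurable
      (by positivity) (by positivity) hweights
  calc meanMass P b ^ b
      ≤ (meanMass P b₁ ^ (s * b₁ / b) * meanMass P b₂ ^ (t * b₂ / b)) ^ b :=
        ENNReal.rpow_le_rpow hholder hb.le
    _ = meanMass P b₁ ^ (s * b₁) * meanMass P b₂ ^ (t * b₂) := by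
        rw [ENNReal.mul_rpow_of_nonneg _ _ hb.le, ← ENNReal.rpow_mul, ← ENNReal.rpow_mul,
          div_mul_cancel₀ _ hb.ne', div_mul_cancel₀ _ hb.ne']

noncomputable def scaledLogMass (P : Measure Y → ℝ≥0∞) (b : ℝ) : ℝ :=
  b * Real.log (meanMass P b).toReal

end MeanMass

section FinitePrior

variable {P : Measure Y → ℝ≥0∞} {𝒲 : Set (Measure Y)}
  (hP : IsFinPrior 𝒲 P) (h𝒲 : ∀ W ∈ 𝒲, IsProbabilityMeasure W)

include hP h𝒲

lemma isFiniteMeasure_refMeasure : IsFiniteMeasure (refMeasure P) := by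
  have := hP.1.fintype
  have hW : ∀ W : Function.support P, (W : Measure Y) univ = 1 := fun W =>
    (h𝒲 W (hP.2.1 W.2)).measure_univ
  constructor
  simp [refMeasure, hW]

lemma lintegral_rnDeriv_refMeasure (W : Function.support P) :
    ∫⁻ y, (W : Measure Y).rnDeriv (refMeasure P) y ∂(refMeasure P) = 1 := by
  have := isFiniteMeasure_refMeasure hP h𝒲
  have := h𝒲 W (hP.2.1 W.2)
  rw [Measure.lintegral_rnDeriv (absolutelyContinuous_refMeasure W), measure_univ]

lemma meanMass_lt_top {b : ℝ} (hb : 0 < b) : meanMass P b < ∞ := by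
  have := hP.1.fintype
  calc meanMass P b
      ≤ ∫⁻ y, ∑' W : Function.support P, (W : Measure Y).rnDeriv (refMeasure P) y
          ∂(refMeasure P) := lintegral_mono (meanDensity_le_tsum_rnDeriv hP.2.2.le hb)
    _ = ∑' _ : Function.support P, 1 := by
        rw [lintegral_tsum fun _ => (Measure.measurable_rnDeriv _ _).aemeasurable]
        exact tsum_congr (lintegral_rnDeriv_refMeasure hP h𝒲)
    _ < ∞ := by simp [tsum_fintype]

lemma meanMass_pos {b : ℝ} (hb : 0 < b) : 0 < meanMass P b := by
  obtain ⟨W, hW⟩ : (Function.support P).Nonempty := by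
    rw [nonempty_iff_ne_empty, Ne, Function.support_eq_empty_iff]
    rintro rfl
    simpa using hP.2.2
  have hW_top : P W ≠ ∞ := ENNReal.ne_top_of_tsum_ne_top (hP.2.2 ▸ ENNReal.one_ne_top) W
  have hle : ∀ y, P W ^ b⁻¹ * (W : Measure Y).rnDeriv (refMeasure P) y ≤ meanDensity P b y :=
    fun y => by
      rw [← ENNReal.rpow_rpow_inv hb.ne' ((W : Measure Y).rnDeriv (refMeasure P) y),
        ← ENNReal.mul_rpow_of_nonneg _ _ (inv_nonneg.2 hb.le)]
      exact ENNReal.rpow_le_rpow (ENNReal.le_tsum (⟨W, hW⟩ : Function.support P))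
        (inv_nonneg.2 hb.le)
  calc 0 < P W ^ b⁻¹ := ENNReal.rpow_pos (pos_iff_ne_zero.2 hW) hW_top
    _ = ∫⁻ y, P W ^ b⁻¹ * (W : Measure Y).rnDeriv (refMeasure P) y ∂(refMeasure P) := by
        rw [lintegral_const_mul _ (Measure.measurable_rnDeriv _ _),
          lintegral_rnDeriv_refMeasure hP h𝒲 ⟨W, hW⟩, mul_one]
    _ ≤ meanMass P b := lintegral_mono hle

lemma meanMass_one : meanMass P 1 = 1 := by
  have := hP.1.countable.to_subtype
  simp only [meanMass, meanDensity, inv_one, ENNReal.rpow_one]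
  rw [lintegral_tsum fun _ => ((Measure.measurable_rnDeriv _ _).const_mul _).aemeasurable,
    ← hP.2.2, ← tsum_subtype_support P]
  refine tsum_congr fun W => ?_
  rw [lintegral_const_mul _ (Measure.measurable_rnDeriv _ _),
    lintegral_rnDeriv_refMeasure hP h𝒲, mul_one]

lemma scaledLogMass_one : scaledLogMass P 1 = 0 := by
  simp [scaledLogMass, meanMass_one hP h𝒲]

lemma convexOn_scaledLogMass : ConvexOn ℝ (Ioi 0) (scaledLogMass P) := by
  refine ⟨convex_Ioi 0, fun x (hx : 0 < x) z (hz : 0 < z) s t hs ht hst => ?_⟩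
  have hc : 0 < s * x + t * z := convex_Ioi (0 : ℝ) hx hz hs ht hst
  have hN : ∀ {b : ℝ}, 0 < b → 0 < (meanMass P b).toReal := fun hb =>
    ENNReal.toReal_pos (meanMass_pos hP h𝒲 hb).ne' (meanMass_lt_top hP h𝒲 hb).ne
  have hreal : (meanMass P (s * x + t * z)).toReal ^ (s * x + t * z)
      ≤ (meanMass P x).toReal ^ (s * x) * (meanMass P z).toReal ^ (t * z) := by
    rw [ENNReal.toReal_rpow, ENNReal.toReal_rpow, ENNReal.toReal_rpow,
      ← ENNReal.toReal_mul]
    exact ENNReal.toReal_mono (ENNReal.mul_ne_top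
      (ENNReal.rpow_ne_top_of_nonneg (by positivity) (meanMass_lt_top hP h𝒲 hx).ne)
      (ENNReal.rpow_ne_top_of_nonneg (by positivity) (meanMass_lt_top hP h𝒲 hz).ne))
      (meanMass_rpow_le hP.1.countable hs ht hst hx hz)
  have hlog := Real.log_le_log (Real.rpow_pos_of_pos (hN hc) _) hreal
  rw [Real.log_mul (Real.rpow_pos_of_pos (hN hx) _).ne' (Real.rpow_pos_of_pos (hN hz) _).ne',
    Real.log_rpow (hN hc), Real.log_rpow (hN hx), Real.log_rpow (hN hz)] at hlog
  simp only [scaledLogMass, smul_eq_mul]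
  linarith

lemma renyiInfo_eq_secant {α : ℝ≥0∞} (hα0 : α ≠ 0) (hα1 : α ≠ 1) (hαtop : α ≠ ∞) :
    renyiInfo α P
      = ((scaledLogMass P α.toReal - scaledLogMass P 1) / (α.toReal - 1) : ℝ) := by
  have ha : 0 < α.toReal := ENNReal.toReal_pos hα0 hαtop
  rw [renyiInfo, if_neg hαtop, if_neg hα1, meanMeasure_univ hαtop,
    ENNReal.log_pos_real (meanMass_pos hP h𝒲 ha).ne' (meanMass_lt_top hP h𝒲 ha).ne,
    ← EReal.coe_mul, scaledLogMass_one hP h𝒲, sub_zero, scaledLogMass, div_mul_eq_mul_div]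

lemma renyiInfo_eq_iSup_rat {α : ℝ≥0∞} (hα0 : α ≠ 0) (hα1 : α ≠ 1) (hαtop : α ≠ ∞) :
    renyiInfo α P = ⨆ (q : ℚ) (_ : (q : ℝ) ∈ Ioi 0 \ {1} ∧ (q : ℝ) < α.toReal),
      renyiInfo (ENNReal.ofReal q) P := by
  have hconvex := convexOn_scaledLogMass hP h𝒲
  have hmono : MonotoneOn (fun b => (scaledLogMass P b - scaledLogMass P 1) / (b - 1))
      (Ioi 0 \ {1}) :=
    fun x hx z hz hxz => hconvex.secant_mono (mem_Ioi.2 one_pos) hx.1 hz.1 hx.2 hz.2 hxz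
  have hcont : ContinuousOn (fun b => (scaledLogMass P b - scaledLogMass P 1) / (b - 1))
      (Ioi 0 \ {1}) :=
    (((hconvex.continuousOn isOpen_Ioi).mono sdiff_subset).sub continuousOn_const).div
      (continuousOn_id.sub continuousOn_const) fun b hb => sub_ne_zero.2 hb.2
  rw [renyiInfo_eq_secant hP h𝒲 hα0 hα1 hαtop,
    coe_eq_iSup_rat_of_monotoneOn (isOpen_Ioi.sdiff isClosed_singleton) hmono hcont
      ⟨ENNReal.toReal_pos hα0 hαtop, fun h => hα1 ((ENNReal.toReal_eq_one_iff α).1 h)⟩]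
  refine iSup_congr fun q => iSup_congr fun hq => ?_
  rw [renyiInfo_eq_secant hP h𝒲 (ENNReal.ofReal_pos.2 hq.1.1).ne'
    (fun h => hq.1.2 (ENNReal.ofReal_eq_one.1 h)) ENNReal.ofReal_ne_top,
    ENNReal.toReal_ofReal hq.1.1.le]

end FinitePrior

lemma renyiCapacity_eq_iSup_rat {𝒲 : Set (Measure Y)}
    (h𝒲 : ∀ W ∈ 𝒲, IsProbabilityMeasure W) {α : ℝ≥0∞} (hα0 : α ≠ 0) (hα1 : α ≠ 1)
    (hαtop : α ≠ ∞) :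
    renyiCapacity α 𝒲 = ⨆ (q : ℚ) (_ : (q : ℝ) ∈ Ioi 0 \ {1} ∧ (q : ℝ) < α.toReal),
      renyiCapacity (ENNReal.ofReal q) 𝒲 := by
  simp only [renyiCapacity]
  rw [← iSup₂_comm]
  exact iSup_congr fun P => iSup_congr fun hP => renyiInfo_eq_iSup_rat hP h𝒲 hα0 hα1 hαtop

/-- There is a countable subset `𝒲' ⊆ 𝒲` whose Rényi capacity agrees with that of `𝒲`
at every order `α ∈ (0,∞]` simultaneously. -/
theorem countable_subset_same_capacity {Y : Type*} [MeasurableSpace Y]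
    (𝒲 : Set (Measure Y)) (h𝒲 : ∀ W ∈ 𝒲, IsProbabilityMeasure W) :
    ∃ 𝒲' : Set (Measure Y), 𝒲' ⊆ 𝒲 ∧ 𝒲'.Countable ∧
      ∀ α : ℝ≥0∞, 0 < α → renyiCapacity α 𝒲' = renyiCapacity α 𝒲 := by
  obtain ⟨𝒲', hsub, hcount, heq⟩ := exists_countable_subset_renyiCapacity_eq
    ((countable_range fun q : ℚ => ENNReal.ofReal q).insert ∞) 𝒲
  refine ⟨𝒲', hsub, hcount, fun α hα => ?_⟩
  rcases eq_or_ne α ∞ with rfl | hαtop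
  · exact heq ∞ (mem_insert _ _)
  rcases eq_or_ne α 1 with rfl | hα1
  · exact heq 1 (mem_insert_of_mem _ ⟨1, by simp⟩)
  rw [renyiCapacity_eq_iSup_rat (fun W hW => h𝒲 W (hsub hW)) hα.ne' hα1 hαtop,
    renyiCapacity_eq_iSup_rat h𝒲 hα.ne' hα1 hαtop]
  exact iSup_congr fun q => iSup_congr fun _ => heq _ (mem_insert_of_mem _ ⟨q, rfl⟩)

end RenyiPaper
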